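/- arXiv:1103.4173 — 2 statements merged into one kernel-verified Lean document; each statement's English description precedes it below -/
import Mathlib

section
/- Let (R, m, k) be a reduced F-finite Noetherian local ring of characteristic p > 0 and I_e = { r ∈ R : φ(F^e_* r) ∈ m for all φ ∈ Hom_R(F^e_* R, R) }. Then for every e ∈ ℕ, I_e^[p] ⊆ I_{e+1}, i.e., for r ∈ I_e one has r^p ∈ I_{e+1}. -/
set_option linter.unusedVariables false

open Filter IsLocalRing

/-- `I^[q]` : the ideal generated by the `q`-th powers of the elements of `I`. -/
def Ideal.bracketPow {R : Type*} [CommSemiring R] (I : Ideal R) (q : ℕ) : Ideal R :=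
  Ideal.span ((fun x => x ^ q) '' (I : Set R))

/-- The length of the `R`-module `M` (as a natural number; junk value when infinite),
computed as the Krull dimension of the lattice of submodules of `M`. -/
noncomputable def mlength (R M : Type*) [Ring R] [AddCommGroup M] [Module R M] : ℕ :=
  ((Order.krullDim (Submodule R M)).unbotD 0).toNat

/-- The length of `(R ⧸ I) ⊗_R M`. -/
noncomputable def lenTensor (R : Type*) [CommRing R] (M : Type*) [AddCommGroup M] [Module R M]
    (I : Ideal R) : ℕ :=
  mlength R (TensorProduct R (R ⧸ I) M)

/-- Type synonym: `M` viewed as an `R`-module via the `e`-th iterate of Frobenius,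
i.e. `F^e_* M`. -/
def FrobMod (R : Type*) (p e : ℕ) (M : Type*) : Type _ := M

/-- `F^e_* m`, the element of `F^e_* M` corresponding to `m : M`. -/
def FrobMod.of (R : Type*) (p e : ℕ) {M : Type*} (m : M) : FrobMod R p e M := m

instance FrobMod.instAddCommGroup {R M : Type*} {p e : ℕ} [AddCommGroup M] :
    AddCommGroup (FrobMod R p e M) := inferInstanceAs (AddCommGroup M)

noncomputable instance FrobMod.instModule {R : Type*} [CommSemiring R] {p e : ℕ} [ExpChar R p]
    {M : Type*} [AddCommGroup M] [Module R M] : Module R (FrobMod R p e M) :=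
  Module.compHom M (iterateFrobenius R p e)

/-- `M` has a free direct summand (isomorphic to `R`). -/
def HasFreeDirectSummand (R M : Type*) [CommRing R] [AddCommGroup M] [Module R M] : Prop :=
  ∃ N N' : Submodule R M, IsCompl N N' ∧ Nonempty (N ≃ₗ[R] R)

/-- `R` is `F`-finite: the Frobenius endomorphism is a finite ring homomorphism,
i.e. `F_* R` is a finitely generated `R`-module. -/
def FFinite (R : Type*) [CommRing R] (p : ℕ) [ExpChar R p] : Prop :=
  RingHom.Finite (frobenius R p)

/-- The set `I_e = { r : R | φ (F^e_* r) ∈ 𝔪 for all φ ∈ Hom_R (F^e_* R, R) }`. -/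
def splittingSet (R : Type*) [CommRing R] [IsLocalRing R] (p e : ℕ) [ExpChar R p] : Set R :=
  {r : R | ∀ φ : FrobMod R p e R →ₗ[R] R, φ (FrobMod.of R p e r) ∈ maximalIdeal R}

/-- `α = α(R) = log_p [k : k^p]`, encoded as `[k^{1/p} : k] = p ^ α` for the residue field `k`. -/
def IsAlphaOf (R : Type*) [CommRing R] [IsLocalRing R] (p : ℕ)
    [ExpChar (ResidueField R) p] (α : ℕ) : Prop :=
  Module.finrank (ResidueField R) (FrobMod (ResidueField R) p 1 (ResidueField R)) = p ^ α

/-- `b` records, for each `e`, a direct sum decomposition `F^e_* M ≅ R^{b e} ⊕ N_e`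
where `N_e` has no free direct summand; i.e. `b e` is the `e`-th Frobenius splitting
number of `M`. -/
def IsFrobSplittingNumbersOf (R : Type*) [CommRing R] (p : ℕ) [ExpChar R p]
    (M : Type*) [AddCommGroup M] [Module R M] (b : ℕ → ℕ) : Prop :=
  ∀ e : ℕ, ∃ Fe Ne : Submodule R (FrobMod R p e M),
    IsCompl Fe Ne ∧ Nonempty (Fe ≃ₗ[R] (Fin (b e) → R)) ∧ ¬ HasFreeDirectSummand R Ne

/-- `a e` is the `e`-th Frobenius splitting number of `R`:
`F^e_* R ≅ R^{a e} ⊕ M_e` with `M_e` having no free direct summand. -/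
def IsFrobSplittingNumbers (R : Type*) [CommRing R] (p : ℕ) [ExpChar R p] (a : ℕ → ℕ) : Prop :=
  IsFrobSplittingNumbersOf R p R a

/-- A local ring is regular if its maximal ideal is generated by `dim R` elements. -/
def RegularLocal (R : Type*) [CommRing R] [IsLocalRing R] : Prop :=
  ∃ s : Finset R, Ideal.span (s : Set R) = maximalIdeal R ∧
    (s.card : WithBot (WithTop ℕ)) = ringKrullDim R

/-- A local ring is Cohen–Macaulay if there is a regular sequence in the maximal ideal
of length `dim R`. -/
def CohenMacaulayLocal (R : Type*) [CommRing R] [IsLocalRing R] : Prop :=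
  ∃ rs : List R, (∀ r ∈ rs, r ∈ maximalIdeal R) ∧ RingTheory.Sequence.IsRegular R rs ∧
    (rs.length : WithBot (WithTop ℕ)) = ringKrullDim R

/-- `R` is strongly `F`-regular: for every `c` not in any minimal prime there are `e`
and `φ : F^e_* R → R` with `φ (F^e_* c) = 1`. -/
def StronglyFRegular (R : Type*) [CommRing R] (p : ℕ) [ExpChar R p] : Prop :=
  ∀ c : R, (∀ P ∈ minimalPrimes R, c ∉ P) →
    ∃ (e : ℕ) (φ : FrobMod R p e R →ₗ[R] R), φ (FrobMod.of R p e c) = 1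

namespace FrobMod

noncomputable def frobeniusLinearMap (R : Type*) [CommRing R] (p e : ℕ) [ExpChar R p] :
    FrobMod R p e R →ₗ[R] FrobMod R p (e + 1) R where
  toFun x := FrobMod.of R p (e + 1) ((id x : R) ^ p)
  map_add' x y := add_pow_expChar (R := R) x y p
  map_smul' c x := by
    change (c ^ p ^ e * (id x : R)) ^ p = c ^ p ^ (e + 1) * (id x : R) ^ p
    rw [mul_pow, ← pow_mul, pow_succ]

end FrobMod

theorem statement6_general {R : Type*} [CommRing R] [IsLocalRing R]
    {p : ℕ} [Fact p.Prime] [CharP R p] (e : ℕ) :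
    ∀ r ∈ splittingSet R p e, r ^ p ∈ splittingSet R p (e + 1) :=
  fun _ hr φ => hr (φ ∘ₗ FrobMod.frobeniusLinearMap R p e)

/-- `I_e^{[p]} ⊆ I_{e+1}`, i.e. `r ∈ I_e → r^p ∈ I_{e+1}`. -/
theorem statement6 {R : Type*} [CommRing R] [IsNoetherianRing R] [IsLocalRing R] [IsReduced R]
    {p : ℕ} [Fact p.Prime] [CharP R p] (hfin : FFinite R p) (e : ℕ) :
    ∀ r ∈ splittingSet R p e, r ^ p ∈ splittingSet R p (e + 1) :=
  statement6_general e
end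

section
/- Let (R, m, k) be a reduced F-finite Noetherian local ring of characteristic p > 0 and set P = ⋂_{e∈ℕ} I_e, where I_e = { r ∈ R : φ(F^e_* r) ∈ m for all φ ∈ Hom_R(F^e_* R, R) }. Then P is either a prime ideal of R or equal to R. (In particular, if c₁, c₂ ∉ P, then c₁c₂ ∉ P.) -/
/-! In a local ring `r ∉ I_e` means some `φ` sends `F^e_* r` to a unit, which may be rescaled
to `1`. If `φ (F^e_* x) = 1` and `ψ (F^{e'}_* y)` is a unit, then
`F^{e+e'}_* z ↦ ψ (F^{e'}_* φ (F^e_* (y^{p^e - 1} z)))` is `R`-linear and sends `F^{e+e'}_* (x y)`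
to `ψ (F^{e'}_* φ (y • F^e_* x)) = ψ (F^{e'}_* y)`, a unit. So `x ∉ I_e` and `y ∉ I_{e'}` give
`x y ∉ I_{e+e'}`: the complement of `⋂_e I_e` is multiplicatively closed. -/

set_option linter.unusedVariables false

open Filter IsLocalRing

namespace FrobMod

variable {R : Type*} [CommRing R] {p : ℕ} [ExpChar R p]
  {M N : Type*} [AddCommGroup M] [Module R M] [AddCommGroup N] [Module R N]

lemma smul_of (e : ℕ) (r : R) (m : M) : r • of R p e m = of R p e (r ^ p ^ e • m) := by
  rw [← iterateFrobenius_def]; rfl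

def map (e : ℕ) (f : M →ₗ[R] N) : FrobMod R p e M →ₗ[R] FrobMod R p e N where
  toFun := f
  map_add' := f.map_add
  map_smul' r := f.map_smul (iterateFrobenius R p e r)

@[simp]
lemma map_of (e : ℕ) (f : M →ₗ[R] N) (m : M) : map e f (of R p e m) = of R p e (f m) := rfl

def iterateEquiv (e e' : ℕ) : FrobMod R p e' (FrobMod R p e M) ≃ₗ[R] FrobMod R p (e + e') M where
  toFun m := m
  invFun m := m
  map_add' _ _ := rfl
  map_smul' r m := by
    change iterateFrobenius R p e (iterateFrobenius R p e' r) • @id M m =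
      iterateFrobenius R p (e + e') r • @id M m
    rw [iterateFrobenius_add_apply]
  left_inv _ := rfl
  right_inv _ := rfl

@[simp]
lemma iterateEquiv_symm_of (e e' : ℕ) (m : M) :
    (iterateEquiv e e').symm (of R p (e + e') m) = of R p e' (of R p e m) := rfl

end FrobMod

section SplittingSet

open FrobMod

variable {R : Type*} [CommRing R] [IsLocalRing R] {p : ℕ} [ExpChar R p]

lemma exists_eq_one_of_notMem_splittingSet {e : ℕ} {r : R} (hr : r ∉ splittingSet R p e) :
    ∃ φ : FrobMod R p e R →ₗ[R] R, φ (of R p e r) = 1 := by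
  simp only [splittingSet, Set.mem_ofPred_eq, not_forall] at hr
  obtain ⟨φ, hφ⟩ := hr
  obtain ⟨u, hu⟩ := not_not.1 ((mem_maximalIdeal _).not.1 hφ)
  exact ⟨(↑u⁻¹ : R) • φ, by simp [← hu]⟩

lemma mul_notMem_splittingSet {e e' : ℕ} {x y : R} (hx : x ∉ splittingSet R p e)
    (hy : y ∉ splittingSet R p e') : x * y ∉ splittingSet R p (e + e') := by
  obtain ⟨φ, hφ⟩ := exists_eq_one_of_notMem_splittingSet hx
  simp only [splittingSet, Set.mem_ofPred_eq, not_forall] at hy ⊢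
  obtain ⟨ψ, hψ⟩ := hy
  refine ⟨ψ ∘ₗ map e' φ ∘ₗ (iterateEquiv e e').symm.toLinearMap ∘ₗ
    map (e + e') (y ^ (p ^ e - 1) • LinearMap.id), ?_⟩
  have hyx : y ^ (p ^ e - 1) * (x * y) = y ^ p ^ e * x := by
    rw [← Nat.sub_add_cancel (Nat.one_le_pow _ _ (expChar_pos R p)), pow_succ, Nat.add_sub_cancel]
    ring
  have hφy : φ (of R p e (y ^ p ^ e * x)) = y := by
    rw [← smul_eq_mul, ← smul_of, map_smul, hφ, smul_eq_mul, mul_one]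
  simpa [hyx, hφy] using hψ

end SplittingSet

theorem statement8_general {R : Type*} [CommRing R] [IsLocalRing R]
    {p : ℕ} [Fact p.Prime] [CharP R p]
    (P : Ideal R) (hP : (P : Set R) = ⋂ e : ℕ, splittingSet R p e) :
    P = ⊤ ∨ P.IsPrime := by
  have hmem : ∀ z : R, z ∈ P ↔ ∀ e : ℕ, z ∈ splittingSet R p e := fun z => by
    rw [← SetLike.mem_coe, hP, Set.mem_iInter]
  refine or_iff_not_imp_left.2 fun hP_top => Ideal.isPrime_iff.2 ⟨hP_top, fun {x y} hxy => ?_⟩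
  by_contra! h
  simp only [hmem, not_forall] at h
  obtain ⟨⟨e, hx⟩, ⟨e', hy⟩⟩ := h
  exact mul_notMem_splittingSet hx hy ((hmem _).1 hxy _)

/-- the splitting prime `P = ⋂_e I_e` is prime or all of `R`. -/
theorem statement8 {R : Type*} [CommRing R] [IsNoetherianRing R] [IsLocalRing R] [IsReduced R]
    {p : ℕ} [Fact p.Prime] [CharP R p] (hfin : FFinite R p)
    (P : Ideal R) (hP : (P : Set R) = ⋂ e : ℕ, splittingSet R p e) :
    P = ⊤ ∨ P.IsPrime :=
  statement8_general P hP
end
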